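/- For a standard normal random variable Z and constants c₁ < c₂, the variance of Z conditional on c₁ ≤ Z ≤ c₂ is strictly less than 1 (the unconditional variance). -/

import Mathlib

/-!
Write `φ` for the standard normal density and `p`, `m₁`, `m₂` for the integrals of `φ x`, `x φ x`,
`x² φ x` over `[c₁, c₂]`. Since `φ' x = -x φ x`, integrating (by parts for `m₂`) gives
`m₁ = φ c₁ - φ c₂` and `m₂ = p + c₁ φ c₁ - c₂ φ c₂`. Hence
`p² (m₂ / p - (m₁ / p)² - 1) = φ c₁ (c₁ p - m₁) + φ c₂ (m₁ - c₂ p)`,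
and both terms are negative because the truncated mean `m₁ / p` lies strictly between `c₁` and `c₂`.
-/

open MeasureTheory ProbabilityTheory Real Set intervalIntegral
open scoped NNReal

local notation "φ" => gaussianPDFReal 0 1

namespace ProbabilityTheory

lemma hasDerivAt_gaussianPDFReal (μ : ℝ) (v : ℝ≥0) (x : ℝ) :
    HasDerivAt (gaussianPDFReal μ v) (-((x - μ) / v) * gaussianPDFReal μ v x) x := by
  have hexp : HasDerivAt (fun y ↦ -(y - μ) ^ 2 / (2 * v)) (-((x - μ) / v)) x :=
    (((hasDerivAt_id x).sub_const μ).fun_pow 2).neg.div_const (2 * (v : ℝ)) |>.congr_deriv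
      (by simp only [id_eq]; ring)
  exact (hexp.exp.const_mul (√(2 * π * v))⁻¹).congr_deriv (by rw [gaussianPDFReal]; ring)

@[fun_prop]
lemma continuous_gaussianPDFReal (μ : ℝ) (v : ℝ≥0) : Continuous (gaussianPDFReal μ v) := by
  rw [gaussianPDFReal_def]; fun_prop

lemma setIntegral_gaussianReal_eq_setIntegral_smul {E : Type*} [NormedAddCommGroup E]
    [NormedSpace ℝ E] {μ : ℝ} {v : ℝ≥0} {s : Set ℝ} (f : ℝ → E) (hv : v ≠ 0)
    (hs : MeasurableSet s) :
    ∫ x in s, f x ∂gaussianReal μ v = ∫ x in s, gaussianPDFReal μ v x • f x := by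
  rw [gaussianReal_of_var_ne_zero _ hv, setIntegral_withDensity_eq_setIntegral_toReal_smul
    (measurable_gaussianPDF _ _) (ae_of_all _ fun _ ↦ gaussianPDF_lt_top) f hs]
  simp_rw [toReal_gaussianPDF]

lemma setIntegral_Icc_gaussianReal {E : Type*} [NormedAddCommGroup E] [NormedSpace ℝ E]
    {μ : ℝ} {v : ℝ≥0} {a b : ℝ} (f : ℝ → E) (hv : v ≠ 0) (hab : a ≤ b) :
    ∫ x in Icc a b, f x ∂gaussianReal μ v = ∫ x in a..b, gaussianPDFReal μ v x • f x := by
  rw [setIntegral_gaussianReal_eq_setIntegral_smul f hv measurableSet_Icc,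
    integral_Icc_eq_integral_Ioc, integral_of_le hab]

lemma gaussianReal_Icc_toReal {μ : ℝ} {v : ℝ≥0} {a b : ℝ} (hv : v ≠ 0) (hab : a ≤ b) :
    (gaussianReal μ v (Icc a b)).toReal = ∫ x in a..b, gaussianPDFReal μ v x := by
  rw [← measureReal_def]
  simpa using setIntegral_Icc_gaussianReal (μ := μ) (fun _ ↦ (1 : ℝ)) hv hab

lemma integral_id_mul_gaussianPDFReal (a b : ℝ) : ∫ x in a..b, x * φ x = φ a - φ b := by
  have hderiv (x : ℝ) : HasDerivAt (fun y ↦ -φ y) (x * φ x) x :=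
    (hasDerivAt_gaussianPDFReal 0 1 x).neg.congr_deriv (by simp)
  rw [integral_eq_sub_of_hasDerivAt (fun x _ ↦ hderiv x)
    ((by fun_prop : Continuous fun x ↦ x * φ x).intervalIntegrable a b)]
  ring

lemma integral_sq_mul_gaussianPDFReal (a b : ℝ) :
    ∫ x in a..b, x ^ 2 * φ x = (∫ x in a..b, φ x) + (a * φ a - b * φ b) := by
  have hderiv (x : ℝ) : HasDerivAt (fun y ↦ -(y * φ y)) (x ^ 2 * φ x - φ x) x := by
    have := ((hasDerivAt_id x).mul (hasDerivAt_gaussianPDFReal 0 1 x)).neg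
    exact this.congr_deriv (by simp; ring)
  have hFTC := integral_eq_sub_of_hasDerivAt (fun x _ ↦ hderiv x)
    ((by fun_prop : Continuous fun x ↦ x ^ 2 * φ x - φ x).intervalIntegrable a b)
  rw [integral_sub ((by fun_prop : Continuous fun x ↦ x ^ 2 * φ x).intervalIntegrable a b)
    ((continuous_gaussianPDFReal 0 1).intervalIntegrable a b)] at hFTC
  linear_combination hFTC

lemma mul_integral_lt_integral_id_mul {f : ℝ → ℝ} {a b : ℝ} (hab : a < b)
    (hf : ContinuousOn f (uIcc a b)) (hpos : ∀ x ∈ Ioo a b, 0 < f x) :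
    a * ∫ x in a..b, f x < ∫ x in a..b, x * f x ∧
      ∫ x in a..b, x * f x < b * ∫ x in a..b, f x := by
  have hint (g : ℝ → ℝ) (hg : Continuous g) : IntervalIntegrable (fun x ↦ g x * f x) volume a b :=
    (hg.continuousOn.mul hf).intervalIntegrable
  have hf' : IntervalIntegrable f volume a b := hf.intervalIntegrable
  have hxf := hint (fun x ↦ x) continuous_id
  have hlow : 0 < ∫ x in a..b, (x - a) * f x :=
    intervalIntegral_pos_of_pos_on (hint _ (by fun_prop))
      (fun x hx ↦ mul_pos (sub_pos.2 hx.1) (hpos x hx)) hab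
  have hhigh : 0 < ∫ x in a..b, (b - x) * f x :=
    intervalIntegral_pos_of_pos_on (hint _ (by fun_prop))
      (fun x hx ↦ mul_pos (sub_pos.2 hx.2) (hpos x hx)) hab
  simp only [sub_mul] at hlow hhigh
  rw [integral_sub hxf (hf'.const_mul a), intervalIntegral.integral_const_mul] at hlow
  rw [integral_sub (hf'.const_mul b) hxf, intervalIntegral.integral_const_mul] at hhigh
  constructor <;> linarith

end ProbabilityTheory

/-- The variance of a standard normal conditional on lying in an interval `[c₁, c₂]` is strictly
smaller than `1`, the unconditional variance. -/
theorem truncated_normal_variance_lt_one (c₁ c₂ : ℝ) (hc : c₁ < c₂) :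
    (∫ z in Set.Icc c₁ c₂, z ^ 2 ∂(gaussianReal 0 1)) /
        ((gaussianReal 0 1) (Set.Icc c₁ c₂)).toReal -
      ((∫ z in Set.Icc c₁ c₂, z ∂(gaussianReal 0 1)) /
        ((gaussianReal 0 1) (Set.Icc c₁ c₂)).toReal) ^ 2 < 1 := by
  simp only [gaussianReal_Icc_toReal one_ne_zero hc.le,
    setIntegral_Icc_gaussianReal _ one_ne_zero hc.le, smul_eq_mul, mul_comm (φ _)]
  rw [integral_sq_mul_gaussianPDFReal, integral_id_mul_gaussianPDFReal]
  have hφ (x : ℝ) : 0 < φ x := gaussianPDFReal_pos 0 1 x one_ne_zero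
  obtain ⟨hlow, hhigh⟩ := mul_integral_lt_integral_id_mul hc
    (continuous_gaussianPDFReal 0 1).continuousOn (fun x _ ↦ hφ x)
  rw [integral_id_mul_gaussianPDFReal] at hlow hhigh
  set p := ∫ x in c₁..c₂, φ x
  have hp : 0 < p :=
    intervalIntegral_pos_of_pos ((continuous_gaussianPDFReal 0 1).intervalIntegrable _ _) hφ hc
  have hvar : (p + (c₁ * φ c₁ - c₂ * φ c₂)) / p - ((φ c₁ - φ c₂) / p) ^ 2 - 1 =
      (φ c₁ * (c₁ * p - (φ c₁ - φ c₂)) + φ c₂ * ((φ c₁ - φ c₂) - c₂ * p)) / p ^ 2 := by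
    field_simp
    ring
  have hnum : φ c₁ * (c₁ * p - (φ c₁ - φ c₂)) + φ c₂ * ((φ c₁ - φ c₂) - c₂ * p) < 0 := by
    linarith [mul_pos (hφ c₁) (sub_pos.2 hlow), mul_pos (hφ c₂) (sub_pos.2 hhigh)]
  linarith [div_neg_of_neg_of_pos hnum (pow_pos hp 2)]
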